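/- Under the standing hypotheses (G is a finite simple C4-free graph, a, b : V(G) → ℕ satisfy a(x) ≥ 2 and b(x) ≥ 2 for all x, d_G(x) = a(x) + b(x) − 1 for every vertex x, and G has no feasible pair), for any (A, B) ∈ 𝒫: the sets A^⋄ and B^⋄ are non-empty; every u ∈ A^⋄ has exactly one neighbor in A* and satisfies d_A(u) = a(u); and every v ∈ B^⋄ has exactly one neighbor in B* and satisfies d_B(v) = b(v). -/
import Mathlib


open Finset
open scoped Classical

variable {V : Type*}

/-- `nbrIn G A x` is the number of neighbors of `x` lying in `A`, i.e. `d_A(x)`. -/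
noncomputable def nbrIn (G : SimpleGraph V) (A : Finset V) (x : V) : ℕ :=
  (A.filter fun y => G.Adj x y).card

/-- `G` contains no cycle of length four: there are no four distinct vertices
`w,x,y,z` with `wx, xy, yz, zw` all edges. -/
def C4Free (G : SimpleGraph V) : Prop :=
  ∀ w x y z : V, w ≠ x → w ≠ y → w ≠ z → x ≠ y → x ≠ z → y ≠ z →
    ¬(G.Adj w x ∧ G.Adj x y ∧ G.Adj y z ∧ G.Adj z w)

/-- `A` is `f`-good: every vertex of `A` has at least `f u` neighbors in `A`. -/
def IsGood (G : SimpleGraph V) (f : V → ℕ) (A : Finset V) : Prop :=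
  ∀ u ∈ A, f u ≤ nbrIn G A u

/-- `A` is `g`-degenerate: every non-empty subset `H ⊆ A` has a vertex `u`
with `d_H(u) ≤ g u`. -/
def IsDegenerate (G : SimpleGraph V) (g : V → ℤ) (A : Finset V) : Prop :=
  ∀ H ⊆ A, H.Nonempty → ∃ u ∈ H, (nbrIn G H u : ℤ) ≤ g u

/-- `(A,B)` is a partition of the vertex set: disjoint, non-empty, covering. -/
def IsPartition [Fintype V] (A B : Finset V) : Prop :=
  Disjoint A B ∧ A.Nonempty ∧ B.Nonempty ∧ A ∪ B = Finset.univ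

/-- `(A,B)` is a feasible pair: disjoint non-empty sets with `A` being `a`-good
and `B` being `b`-good. -/
def FeasiblePair (G : SimpleGraph V) (a b : V → ℕ) (A B : Finset V) : Prop :=
  Disjoint A B ∧ A.Nonempty ∧ B.Nonempty ∧ IsGood G a A ∧ IsGood G b B

/-- `(A,B)` is an `(a,b)`-partition: a partition with `A` being `(a-1)`-degenerate
and `B` being `(b-1)`-degenerate. -/
def ABPartition [Fintype V] (G : SimpleGraph V) (a b : V → ℕ) (A B : Finset V) : Prop :=
  IsPartition A B ∧ IsDegenerate G (fun x => (a x : ℤ) - 1) A ∧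
    IsDegenerate G (fun x => (b x : ℤ) - 1) B

/-- The number of edges of the subgraph of `G` induced on `A`. -/
noncomputable def edgesIn (G : SimpleGraph V) (A : Finset V) : ℕ :=
  ((A ×ˢ A).filter fun p => G.Adj p.1 p.2).card / 2

/-- The weight `w(A,B) = |E(G[A])| + |E(G[B])| + Σ_{x∈A} b(x) + Σ_{x∈B} a(x)`. -/
noncomputable def weight (G : SimpleGraph V) (a b : V → ℕ) (A B : Finset V) : ℕ :=
  edgesIn G A + edgesIn G B + ∑ x ∈ A, b x + ∑ x ∈ B, a x

/-- `(A,B)` belongs to `𝒫`: it is an `(a,b)`-partition of maximum weight among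
all `(a,b)`-partitions. -/
def MaxAB [Fintype V] (G : SimpleGraph V) (a b : V → ℕ) (A B : Finset V) : Prop :=
  ABPartition G a b A B ∧
    ∀ A' B' : Finset V, ABPartition G a b A' B' → weight G a b A' B' ≤ weight G a b A B

/-- `starSet G f A` is `A* = {x ∈ A : d_A(x) ≤ f(x) - 1}`. -/
noncomputable def starSet (G : SimpleGraph V) (f : V → ℕ) (A : Finset V) : Finset V :=
  A.filter fun x => nbrIn G A x < f x
section Helpers

variable (G : SimpleGraph V)

lemma nbrIn_mono {s t : Finset V} (h : s ⊆ t) (x : V) :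
    nbrIn G s x ≤ nbrIn G t x :=
  Finset.card_le_card (Finset.filter_subset_filter _ h)

lemma nbrIn_union {s t : Finset V} (h : Disjoint s t) (x : V) :
    nbrIn G (s ∪ t) x = nbrIn G s x + nbrIn G t x := by
  unfold nbrIn
  rw [Finset.filter_union, Finset.card_union_of_disjoint
    (h.mono (Finset.filter_subset _ _) (Finset.filter_subset _ _))]

lemma nbrIn_sdiff {s t : Finset V} (h : s ⊆ t) (x : V) :
    nbrIn G (t \ s) x + nbrIn G s x = nbrIn G t x := by
  rw [← nbrIn_union G Finset.sdiff_disjoint x, Finset.sdiff_union_of_subset h]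

lemma nbrIn_insert {s : Finset V} {x : V} (hx : x ∉ s) (y : V) :
    nbrIn G (insert x s) y = nbrIn G s y + if G.Adj y x then 1 else 0 := by
  unfold nbrIn
  rw [Finset.filter_insert]
  split_ifs with h
  · rw [Finset.card_insert_of_notMem (fun hc => hx (Finset.mem_filter.1 hc).1)]
  · omega

lemma nbrIn_erase_self (s : Finset V) (x : V) :
    nbrIn G (s.erase x) x = nbrIn G s x := by
  unfold nbrIn
  congr 1
  ext y
  simp only [Finset.mem_filter, Finset.mem_erase]
  constructor
  · rintro ⟨⟨_, hy⟩, h⟩; exact ⟨hy, h⟩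
  · rintro ⟨hy, h⟩; exact ⟨⟨(G.ne_of_adj h).symm, hy⟩, h⟩

lemma nbrIn_erase {s : Finset V} {x : V} (hx : x ∈ s) (y : V) :
    nbrIn G s y = nbrIn G (s.erase x) y + if G.Adj y x then 1 else 0 := by
  conv_lhs => rw [← Finset.insert_erase hx]
  rw [nbrIn_insert G (Finset.notMem_erase _ _) y]

lemma nbrIn_univ [Fintype V] (x : V) : nbrIn G Finset.univ x = G.degree x := by
  unfold nbrIn
  rw [SimpleGraph.degree]
  congr 1
  ext y
  simp [SimpleGraph.mem_neighborFinset]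

lemma nbrIn_partition [Fintype V] {A B : Finset V} (hU : A ∪ B = Finset.univ)
    (hD : Disjoint A B) (x : V) :
    nbrIn G A x + nbrIn G B x = G.degree x := by
  rw [← nbrIn_univ G x, ← hU, nbrIn_union G hD x]

lemma nbrIn_lt_card {s : Finset V} {x : V} (hx : x ∈ s) :
    nbrIn G s x + 1 ≤ s.card := by
  have h1 : nbrIn G s x ≤ (s.erase x).card := by
    apply Finset.card_le_card
    intro y hy
    obtain ⟨hy1, hy2⟩ := Finset.mem_filter.1 hy
    exact Finset.mem_erase.2 ⟨(G.ne_of_adj hy2).symm, hy1⟩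
  have h2 := Finset.card_erase_add_one hx
  omega

lemma exists_adj_of_one_le {s : Finset V} {x : V} (h : 1 ≤ nbrIn G s x) :
    ∃ y ∈ s, G.Adj x y := by
  obtain ⟨y, hy⟩ := Finset.card_pos.1 h
  obtain ⟨hy1, hy2⟩ := Finset.mem_filter.1 hy
  exact ⟨y, hy1, hy2⟩

lemma exists_two_adj {s : Finset V} {x : V} (h : 2 ≤ nbrIn G s x) :
    ∃ y ∈ s, ∃ z ∈ s, y ≠ z ∧ G.Adj x y ∧ G.Adj x z := by
  obtain ⟨y, hy, z, hz, hne⟩ := Finset.one_lt_card.1 h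
  obtain ⟨hy1, hy2⟩ := Finset.mem_filter.1 hy
  obtain ⟨hz1, hz2⟩ := Finset.mem_filter.1 hz
  exact ⟨y, hy1, z, hz1, hne, hy2, hz2⟩

end Helpers
section Edges

variable (G : SimpleGraph V)

lemma pairSet_insert {s : Finset V} {x : V} (hx : x ∉ s) :
    ((insert x s ×ˢ insert x s).filter fun p => G.Adj p.1 p.2) =
      (((s ×ˢ s).filter fun p => G.Adj p.1 p.2)
        ∪ (s.filter fun y => G.Adj x y).image (fun y => (x, y)))
        ∪ (s.filter fun y => G.Adj y x).image (fun y => (y, x)) := by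
  ext ⟨u, v⟩
  simp only [Finset.mem_filter, Finset.mem_product, Finset.mem_insert, Finset.mem_union,
    Finset.mem_image, Prod.mk.injEq]
  constructor
  · rintro ⟨⟨hu | hu, hv | hv⟩, hadj⟩
    · subst hu; subst hv; exact absurd hadj (G.irrefl)
    · subst hu; exact Or.inl (Or.inr ⟨v, ⟨hv, hadj⟩, rfl, rfl⟩)
    · subst hv; exact Or.inr ⟨u, ⟨hu, hadj⟩, rfl, rfl⟩
    · exact Or.inl (Or.inl ⟨⟨hu, hv⟩, hadj⟩)
  · rintro ((⟨⟨hu, hv⟩, hadj⟩ | ⟨y, ⟨hy, hadj⟩, rfl, rfl⟩) | ⟨y, ⟨hy, hadj⟩, rfl, rfl⟩)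
    · exact ⟨⟨Or.inr hu, Or.inr hv⟩, hadj⟩
    · exact ⟨⟨Or.inl rfl, Or.inr hy⟩, hadj⟩
    · exact ⟨⟨Or.inr hy, Or.inl rfl⟩, hadj⟩

lemma pairCount_insert {s : Finset V} {x : V} (hx : x ∉ s) :
    ((insert x s ×ˢ insert x s).filter fun p => G.Adj p.1 p.2).card =
      ((s ×ˢ s).filter fun p => G.Adj p.1 p.2).card + 2 * nbrIn G s x := by
  rw [pairSet_insert G hx]
  have hd1 : Disjoint ((s ×ˢ s).filter fun p => G.Adj p.1 p.2)
      ((s.filter fun y => G.Adj x y).image (fun y => (x, y))) := by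
    rw [Finset.disjoint_left]
    rintro ⟨u, v⟩ hp hq
    obtain ⟨hmem, _⟩ := Finset.mem_filter.1 hp
    have hu : u ∈ s := (Finset.mem_product.1 hmem).1
    obtain ⟨y, _, heq⟩ := Finset.mem_image.1 hq
    cases heq
    exact hx hu
  have hd2 : Disjoint (((s ×ˢ s).filter fun p => G.Adj p.1 p.2)
        ∪ (s.filter fun y => G.Adj x y).image (fun y => (x, y)))
      ((s.filter fun y => G.Adj y x).image (fun y => (y, x))) := by
    rw [Finset.disjoint_left]
    rintro ⟨u, v⟩ hp hq
    obtain ⟨y, _, heq⟩ := Finset.mem_image.1 hq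
    cases heq
    rcases Finset.mem_union.1 hp with hp | hp
    · obtain ⟨hmem, _⟩ := Finset.mem_filter.1 hp
      exact hx (Finset.mem_product.1 hmem).2
    · obtain ⟨z, hz, heq2⟩ := Finset.mem_image.1 hp
      have : x ∈ s := by
        have := congrArg Prod.snd heq2
        simp only at this
        rw [this] at hz
        exact (Finset.mem_filter.1 hz).1
      exact hx this
  rw [Finset.card_union_of_disjoint hd2, Finset.card_union_of_disjoint hd1]
  rw [Finset.card_image_of_injective _ (fun p q h => congrArg Prod.snd h),
    Finset.card_image_of_injective _ (fun p q h => congrArg Prod.fst h)]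
  have hrev : (s.filter fun y => G.Adj y x) = (s.filter fun y => G.Adj x y) := by
    ext y; simp [G.adj_comm]
  rw [hrev]
  unfold nbrIn
  omega

lemma edgesIn_insert {s : Finset V} {x : V} (hx : x ∉ s) :
    edgesIn G (insert x s) = edgesIn G s + nbrIn G s x := by
  unfold edgesIn
  rw [pairCount_insert G hx]
  omega

lemma edgesIn_erase {s : Finset V} {x : V} (hx : x ∈ s) :
    edgesIn G s = edgesIn G (s.erase x) + nbrIn G s x := by
  conv_lhs => rw [← Finset.insert_erase hx]
  rw [edgesIn_insert G (Finset.notMem_erase _ _), nbrIn_erase_self]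

end Edges
section Degen

variable (G : SimpleGraph V)

lemma good_of_not_degenerate {f : V → ℕ} {s : Finset V}
    (h : ¬ IsDegenerate G (fun x => (f x : ℤ) - 1) s) :
    ∃ T ⊆ s, T.Nonempty ∧ IsGood G f T := by
  unfold IsDegenerate at h
  push_neg at h
  obtain ⟨H, hsub, hne, hall⟩ := h
  refine ⟨H, hsub, hne, fun u hu => ?_⟩
  have h2 : (f u : ℤ) - 1 < (nbrIn G H u : ℤ) := hall u hu
  omega

lemma degenerate_subset {g : V → ℤ} {s t : Finset V}
    (h : IsDegenerate G g s) (hts : t ⊆ s) : IsDegenerate G g t :=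
  fun H hH hne => h H (hH.trans hts) hne

lemma no_good_subset {f : V → ℕ} {s T : Finset V}
    (h : IsDegenerate G (fun x => (f x : ℤ) - 1) s) (hsub : T ⊆ s)
    (hne : T.Nonempty) (hgood : IsGood G f T) : False := by
  obtain ⟨u, hu, hle⟩ := h T hsub hne
  have hle' : (nbrIn G T u : ℤ) ≤ (f u : ℤ) - 1 := hle
  have := hgood u hu
  omega

lemma star_nonempty {f : V → ℕ} {s : Finset V}
    (h : IsDegenerate G (fun x => (f x : ℤ) - 1) s) (hne : s.Nonempty) :
    (starSet G f s).Nonempty := by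
  obtain ⟨u, hu, hle⟩ := h s (Finset.Subset.refl _) hne
  have hle' : (nbrIn G s u : ℤ) ≤ (f u : ℤ) - 1 := hle
  exact ⟨u, Finset.mem_filter.2 ⟨hu, by omega⟩⟩

end Degen

section Weight

variable (G : SimpleGraph V) (a b : V → ℕ)

lemma weight_lt_one [Fintype V] {A B : Finset V} (hU : A ∪ B = Finset.univ)
    (hD : Disjoint A B) (hdeg : ∀ x : V, G.degree x + 1 = a x + b x)
    {x : V} (hxA : x ∈ A) (hx : nbrIn G A x + 1 ≤ a x) :
    weight G a b A B < weight G a b (A.erase x) (insert x B) := by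
  have hxB : x ∉ B := fun h => Finset.disjoint_left.1 hD hxA h
  have e1 : edgesIn G A = edgesIn G (A.erase x) + nbrIn G A x := edgesIn_erase G hxA
  have e2 : edgesIn G (insert x B) = edgesIn G B + nbrIn G B x := edgesIn_insert G hxB
  have s1 : ∑ z ∈ A.erase x, b z + b x = ∑ z ∈ A, b z := Finset.sum_erase_add _ _ hxA
  have s2 : ∑ z ∈ insert x B, a z = a x + ∑ z ∈ B, a z := Finset.sum_insert hxB
  have hdx : nbrIn G A x + nbrIn G B x + 1 = a x + b x := by
    have h1 := nbrIn_partition G hU hD x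
    have h2 := hdeg x
    omega
  unfold weight
  rw [e1, e2, s2, ← s1]
  omega

lemma weight_lt_two [Fintype V] {A B : Finset V} (hU : A ∪ B = Finset.univ)
    (hD : Disjoint A B) (hdeg : ∀ x : V, G.degree x + 1 = a x + b x)
    {x y : V} (hxA : x ∈ A) (hyB : y ∈ B) (hnadj : ¬ G.Adj x y)
    (hx : nbrIn G A x + 1 ≤ a x) (hy : a y ≤ nbrIn G A y) :
    weight G a b A B < weight G a b (insert y (A.erase x)) (insert x (B.erase y)) := by
  have hxB : x ∉ B := fun h => Finset.disjoint_left.1 hD hxA h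
  have hyA : y ∉ A := fun h => Finset.disjoint_left.1 hD h hyB
  have hyA' : y ∉ A.erase x := fun h => hyA (Finset.mem_of_mem_erase h)
  have hxB' : x ∉ B.erase y := fun h => hxB (Finset.mem_of_mem_erase h)
  have e1 : edgesIn G A = edgesIn G (A.erase x) + nbrIn G A x := edgesIn_erase G hxA
  have e2 : edgesIn G B = edgesIn G (B.erase y) + nbrIn G B y := edgesIn_erase G hyB
  have e3 : edgesIn G (insert y (A.erase x)) = edgesIn G (A.erase x) + nbrIn G (A.erase x) y :=
    edgesIn_insert G hyA'
  have e4 : edgesIn G (insert x (B.erase y)) = edgesIn G (B.erase y) + nbrIn G (B.erase y) x :=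
    edgesIn_insert G hxB'
  have n1 : nbrIn G A y = nbrIn G (A.erase x) y + if G.Adj y x then 1 else 0 :=
    nbrIn_erase G hxA y
  rw [if_neg (fun h => hnadj h.symm)] at n1
  have n2 : nbrIn G B x = nbrIn G (B.erase y) x + if G.Adj x y then 1 else 0 :=
    nbrIn_erase G hyB x
  rw [if_neg hnadj] at n2
  have s1 : ∑ z ∈ A.erase x, b z + b x = ∑ z ∈ A, b z := Finset.sum_erase_add _ _ hxA
  have s2 : ∑ z ∈ B.erase y, a z + a y = ∑ z ∈ B, a z := Finset.sum_erase_add _ _ hyB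
  have s3 : ∑ z ∈ insert y (A.erase x), b z = b y + ∑ z ∈ A.erase x, b z :=
    Finset.sum_insert hyA'
  have s4 : ∑ z ∈ insert x (B.erase y), a z = a x + ∑ z ∈ B.erase y, a z :=
    Finset.sum_insert hxB'
  have d1 : nbrIn G A x + nbrIn G B x + 1 = a x + b x := by
    have h1 := nbrIn_partition G hU hD x
    have h2 := hdeg x
    omega
  have d2 : nbrIn G A y + nbrIn G B y + 1 = a y + b y := by
    have h1 := nbrIn_partition G hU hD y
    have h2 := hdeg y
    omega
  unfold weight
  rw [e1, e2, e3, e4, s3, s4, ← s1, ← s2]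
  omega

lemma weight_swap [Fintype V] (A B : Finset V) :
    weight G a b A B = weight G b a B A := by
  unfold weight; ring

lemma ABPartition_swap [Fintype V] {A B : Finset V} (h : ABPartition G a b A B) :
    ABPartition G b a B A := by
  obtain ⟨⟨d, na, nb, u⟩, dA, dB⟩ := h
  exact ⟨⟨d.symm, nb, na, by rw [Finset.union_comm]; exact u⟩, dB, dA⟩

lemma MaxAB_swap [Fintype V] {A B : Finset V} (h : MaxAB G a b A B) :
    MaxAB G b a B A := by
  obtain ⟨p, m⟩ := h
  refine ⟨ABPartition_swap G a b p, fun A' B' h' => ?_⟩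
  rw [← weight_swap G a b A B]
  calc weight G b a A' B' = weight G a b B' A' := (weight_swap G a b B' A').symm
    _ ≤ weight G a b A B := m B' A' (ABPartition_swap G b a h')

lemma hnf_swap (hnf : ¬ ∃ A B : Finset V, FeasiblePair G a b A B) :
    ¬ ∃ A B : Finset V, FeasiblePair G b a A B := by
  rintro ⟨X, Y, d, nx, ny, gx, gy⟩
  exact hnf ⟨Y, X, d.symm, ny, nx, gy, gx⟩

end Weight
section Swap

lemma exists_bgood [Fintype V] (G : SimpleGraph V) (a b : V → ℕ)
    (ha : ∀ x : V, 2 ≤ a x)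
    (hdeg : ∀ x : V, G.degree x + 1 = a x + b x)
    (A B : Finset V) (hAB : MaxAB G a b A B)
    (x : V) (hxA : x ∈ A) (hx : nbrIn G A x < a x) :
    ∃ T, T ⊆ insert x B ∧ T.Nonempty ∧ IsGood G b T := by
  have hD : Disjoint A B := hAB.1.1.1
  have hU : A ∪ B = Finset.univ := hAB.1.1.2.2.2
  have hxB : x ∉ B := fun h => Finset.disjoint_left.1 hD hxA h
  by_cases hdg : IsDegenerate G (fun v => (b v : ℤ) - 1) (insert x B)
  · exfalso
    rcases (A.erase x).eq_empty_or_nonempty with hem | hne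
    · -- A = {x}, so insert x B = univ
      have hAx : A = {x} := by
        apply Finset.eq_singleton_iff_unique_mem.2
        refine ⟨hxA, fun z hz => ?_⟩
        by_contra hzx
        have : z ∈ A.erase x := Finset.mem_erase.2 ⟨hzx, hz⟩
        rw [hem] at this
        exact absurd this (Finset.notMem_empty z)
      have huniv : insert x B = Finset.univ := by
        rw [Finset.insert_eq, ← hAx, hU]
      obtain ⟨u, _, hle⟩ := hdg Finset.univ (by rw [huniv]) ⟨x, Finset.mem_univ x⟩
      have hle' : (nbrIn G Finset.univ u : ℤ) ≤ (b u : ℤ) - 1 := hle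
      rw [nbrIn_univ G u] at hle'
      have h1 := hdeg u
      have h2 := ha u
      omega
    · -- weight contradiction
      have hpart : ABPartition G a b (A.erase x) (insert x B) := by
        refine ⟨⟨?_, hne, ⟨x, Finset.mem_insert_self x B⟩, ?_⟩, ?_, hdg⟩
        · rw [Finset.disjoint_left]
          intro z hz hz'
          obtain ⟨hzx, hzA⟩ := Finset.mem_erase.1 hz
          rcases Finset.mem_insert.1 hz' with h | h
          · exact hzx h
          · exact Finset.disjoint_left.1 hD hzA h
        · ext z
          simp only [Finset.mem_union, Finset.mem_erase, Finset.mem_insert, Finset.mem_univ,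
            iff_true]
          have hz : z ∈ A ∨ z ∈ B := by
            rw [← Finset.mem_union, hU]; exact Finset.mem_univ z
          by_cases hzx : z = x
          · exact Or.inr (Or.inl hzx)
          · rcases hz with h | h
            · exact Or.inl ⟨hzx, h⟩
            · exact Or.inr (Or.inr h)
        · exact degenerate_subset G hAB.1.2.1 (Finset.erase_subset x A)
      have hle := hAB.2 _ _ hpart
      have hlt := weight_lt_one G a b hU hD hdeg hxA (by omega)
      omega
  · obtain ⟨T, hsub, hne, hgood⟩ := good_of_not_degenerate G hdg
    exact ⟨T, hsub, hne, hgood⟩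

end Swap
section StarAdj

lemma star_adj [Fintype V] (G : SimpleGraph V) (a b : V → ℕ)
    (ha : ∀ x : V, 2 ≤ a x) (hb : ∀ x : V, 2 ≤ b x)
    (hdeg : ∀ x : V, G.degree x + 1 = a x + b x)
    (hnf : ¬ ∃ A B : Finset V, FeasiblePair G a b A B)
    (A B : Finset V) (hAB : MaxAB G a b A B)
    {x y : V} (hx : x ∈ starSet G a A) (hy : y ∈ starSet G b B) : G.Adj x y := by
  have hD : Disjoint A B := hAB.1.1.1
  have hU : A ∪ B = Finset.univ := hAB.1.1.2.2.2
  obtain ⟨hxA, hxlt⟩ := Finset.mem_filter.1 hx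
  obtain ⟨hyB, hylt⟩ := Finset.mem_filter.1 hy
  have hdeg' : ∀ z : V, G.degree z + 1 = b z + a z := fun z => by rw [hdeg z, Nat.add_comm]
  have hxB : x ∉ B := fun h => Finset.disjoint_left.1 hD hxA h
  have hyA : y ∉ A := fun h => Finset.disjoint_left.1 hD h hyB
  have hxy : x ≠ y := fun h => hyA (h ▸ hxA)
  by_contra hnadj
  have hyage : a y ≤ nbrIn G A y := by
    have h1 := nbrIn_partition G hU hD y
    have h2 := hdeg y
    omega
  by_cases h1 : IsDegenerate G (fun z => (a z : ℤ) - 1) (insert y (A.erase x))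
  · by_cases h2 : IsDegenerate G (fun z => (b z : ℤ) - 1) (insert x (B.erase y))
    · -- both degenerate : weight contradiction
      have hpart : ABPartition G a b (insert y (A.erase x)) (insert x (B.erase y)) := by
        refine ⟨⟨?_, ⟨y, Finset.mem_insert_self _ _⟩, ⟨x, Finset.mem_insert_self _ _⟩, ?_⟩,
          h1, h2⟩
        · rw [Finset.disjoint_left]
          intro z hz hz'
          rcases Finset.mem_insert.1 hz with rfl | hz
          · rcases Finset.mem_insert.1 hz' with h | h
            · exact hxy h.symm
            · exact (Finset.mem_erase.1 h).1 rfl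
          · obtain ⟨hzx, hzA⟩ := Finset.mem_erase.1 hz
            rcases Finset.mem_insert.1 hz' with h | h
            · exact hzx h
            · exact Finset.disjoint_left.1 hD hzA (Finset.mem_of_mem_erase h)
        · ext z
          simp only [Finset.mem_union, Finset.mem_insert, Finset.mem_erase, Finset.mem_univ,
            iff_true]
          have hz : z ∈ A ∨ z ∈ B := by
            rw [← Finset.mem_union, hU]; exact Finset.mem_univ z
          by_cases hzx : z = x
          · exact Or.inr (Or.inl hzx)
          by_cases hzy : z = y
          · exact Or.inl (Or.inl hzy)
          rcases hz with h | h
          · exact Or.inl (Or.inr ⟨hzx, h⟩)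
          · exact Or.inr (Or.inr ⟨hzy, h⟩)
      have hle := hAB.2 _ _ hpart
      have hlt := weight_lt_two G a b hU hD hdeg hxA hyB hnadj (by omega) hyage
      omega
    · -- B-side violator : pair with A_y
      obtain ⟨T, hTsub, hTne, hTgood⟩ := good_of_not_degenerate G h2
      obtain ⟨S, hSsub, hSne, hSgood⟩ :=
        exists_bgood G b a hb hdeg' B A (MaxAB_swap G a b hAB) y hyB hylt
      have hxS : x ∉ S := by
        intro hmem
        have hg := hSgood x hmem
        have hm : nbrIn G S x ≤ nbrIn G (insert y A) x := nbrIn_mono G hSsub x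
        have hi : nbrIn G (insert y A) x = nbrIn G A x + if G.Adj x y then 1 else 0 :=
          nbrIn_insert G hyA x
        rw [if_neg hnadj] at hi
        omega
      have hdisj : Disjoint S T := by
        rw [Finset.disjoint_left]
        intro z hzS hzT
        rcases Finset.mem_insert.1 (hSsub hzS) with rfl | hzA
        · rcases Finset.mem_insert.1 (hTsub hzT) with h | h
          · exact hxy h.symm
          · exact (Finset.mem_erase.1 h).1 rfl
        · rcases Finset.mem_insert.1 (hTsub hzT) with rfl | h
          · exact hxS hzS
          · exact Finset.disjoint_left.1 hD hzA (Finset.mem_of_mem_erase h)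
      exact hnf ⟨S, T, hdisj, hSne, hTne, hSgood, hTgood⟩
  · -- A-side violator : pair with B_x
    obtain ⟨S, hSsub, hSne, hSgood⟩ := good_of_not_degenerate G h1
    obtain ⟨T, hTsub, hTne, hTgood⟩ := exists_bgood G a b ha hdeg A B hAB x hxA hxlt
    have hyT : y ∉ T := by
      intro hmem
      have hg := hTgood y hmem
      have hm : nbrIn G T y ≤ nbrIn G (insert x B) y := nbrIn_mono G hTsub y
      have hi : nbrIn G (insert x B) y = nbrIn G B y + if G.Adj y x then 1 else 0 :=
        nbrIn_insert G hxB y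
      rw [if_neg (fun h => hnadj h.symm)] at hi
      omega
    have hdisj : Disjoint S T := by
      rw [Finset.disjoint_left]
      intro z hzS hzT
      rcases Finset.mem_insert.1 (hSsub hzS) with rfl | hz
      · exact hyT hzT
      · obtain ⟨hzx, hzA⟩ := Finset.mem_erase.1 hz
        rcases Finset.mem_insert.1 (hTsub hzT) with h | h
        · exact hzx h
        · exact Finset.disjoint_left.1 hD hzA h
    exact hnf ⟨S, T, hdisj, hSne, hTne, hSgood, hTgood⟩

end StarAdj
section Main

lemma mainA [Fintype V] (G : SimpleGraph V) (a b : V → ℕ)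
    (hC4 : C4Free G) (ha : ∀ x : V, 2 ≤ a x) (hb : ∀ x : V, 2 ≤ b x)
    (hdeg : ∀ x : V, G.degree x + 1 = a x + b x)
    (hnf : ¬ ∃ A B : Finset V, FeasiblePair G a b A B)
    (A B : Finset V) (hAB : MaxAB G a b A B) :
    ((A \ starSet G a A).filter fun u => nbrIn G (A \ starSet G a A) u < a u).Nonempty ∧
      ∀ u ∈ (A \ starSet G a A).filter fun u => nbrIn G (A \ starSet G a A) u < a u,
        nbrIn G (starSet G a A) u = 1 ∧ nbrIn G A u = a u := by
  have hD : Disjoint A B := hAB.1.1.1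
  have hAne : A.Nonempty := hAB.1.1.2.1
  have hBne : B.Nonempty := hAB.1.1.2.2.1
  have hU : A ∪ B = Finset.univ := hAB.1.1.2.2.2
  have hdgA := hAB.1.2.1
  have hdgB := hAB.1.2.2
  have hdeg' : ∀ z : V, G.degree z + 1 = b z + a z := fun z => by rw [hdeg z, Nat.add_comm]
  have hdsum : ∀ z : V, nbrIn G A z + nbrIn G B z + 1 = a z + b z := fun z => by
    have h1 := nbrIn_partition G hU hD z
    have h2 := hdeg z
    omega
  have hAsub : starSet G a A ⊆ A := Finset.filter_subset _ _
  have hBsub : starSet G b B ⊆ B := Finset.filter_subset _ _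
  have hneAB : ∀ {z w : V}, z ∈ A → w ∈ B → z ≠ w :=
    fun hz hw h => Finset.disjoint_left.1 hD hz (h ▸ hw)
  have hadj : ∀ {z w : V}, z ∈ starSet G a A → w ∈ starSet G b B → G.Adj z w :=
    fun hz hw => star_adj G a b ha hb hdeg hnf A B hAB hz hw
  have agood : ∀ y ∈ starSet G b B,
      ∃ S, S ⊆ insert y A ∧ S.Nonempty ∧ IsGood G a S := by
    intro y hy
    exact exists_bgood G b a hb hdeg' B A (MaxAB_swap G a b hAB) y
      (hBsub hy) (Finset.mem_filter.1 hy).2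
  have bgood : ∀ x, x ∈ A → nbrIn G A x < a x →
      ∃ T, T ⊆ insert x B ∧ T.Nonempty ∧ IsGood G b T :=
    fun x hx hlt => exists_bgood G a b ha hdeg A B hAB x hx hlt
  -- B* is nonempty
  obtain ⟨y0, hy0⟩ : (starSet G b B).Nonempty := star_nonempty G hdgB hBne
  have hy0B : y0 ∈ B := hBsub hy0
  -- Part 1 : A \ A* is nonempty
  have hMain : (A \ starSet G a A).Nonempty := by
    by_contra hcon
    rw [Finset.not_nonempty_iff_eq_empty, Finset.sdiff_eq_empty_iff_subset] at hcon
    have hstarA : ∀ {z : V}, z ∈ A → nbrIn G A z < a z :=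
      fun hz => (Finset.mem_filter.1 (hcon hz)).2
    -- |A| ≥ 2
    obtain ⟨S0, hS0sub, hS0ne, hS0good⟩ := agood y0 hy0
    obtain ⟨u0, hu0⟩ := hS0ne
    have hA2 : 2 ≤ A.card := by
      have h1 := hS0good u0 hu0
      have h2 := nbrIn_lt_card G hu0
      have h3 := Finset.card_le_card hS0sub
      have h4 := Finset.card_insert_le y0 A
      have h5 := ha u0
      omega
    -- B \ B* is nonempty
    obtain ⟨x0, hx0A⟩ := hAne
    have hx0B2 : 2 ≤ nbrIn G B x0 := by
      have h1 := hdsum x0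
      have h2 := hstarA hx0A
      have h3 := hb x0
      omega
    have hx0star : nbrIn G (starSet G b B) x0 ≤ 1 := by
      by_contra hgt
      push_neg at hgt
      obtain ⟨y1, hy1s, y2, hy2s, hne12, hady1, hady2⟩ := exists_two_adj G hgt
      obtain ⟨x', hx'A, hx'ne⟩ := Finset.exists_mem_ne hA2 x0
      exact hC4 x0 y1 x' y2
        (hneAB hx0A (hBsub hy1s)) (Ne.symm hx'ne) (hneAB hx0A (hBsub hy2s))
        ((hneAB hx'A (hBsub hy1s)).symm) hne12 (hneAB hx'A (hBsub hy2s))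
        ⟨hady1, (hadj (hcon hx'A) hy1s).symm, hadj (hcon hx'A) hy2s, hady2.symm⟩
    have hBdne : (B \ starSet G b B).Nonempty := by
      have hsp := nbrIn_sdiff G hBsub x0
      have h1 : 1 ≤ nbrIn G (B \ starSet G b B) x0 := by omega
      obtain ⟨z, hz, _⟩ := exists_adj_of_one_le G h1
      exact ⟨z, hz⟩
    -- low-degree vertex v of B \ B*
    obtain ⟨v, hvBB, hvle⟩ := hdgB (B \ starSet G b B) Finset.sdiff_subset hBdne
    have hvle' : (nbrIn G (B \ starSet G b B) v : ℤ) ≤ (b v : ℤ) - 1 := hvle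
    obtain ⟨hvB, hvns⟩ := Finset.mem_sdiff.1 hvBB
    have hvBge : b v ≤ nbrIn G B v := by
      by_contra h
      push_neg at h
      exact hvns (Finset.mem_filter.2 ⟨hvB, h⟩)
    have hvsplit := nbrIn_sdiff G hBsub v
    have hvstar_le : nbrIn G (starSet G b B) v ≤ 1 := by
      by_contra hgt
      push_neg at hgt
      obtain ⟨y1, hy1s, y2, hy2s, hne12, hady1, hady2⟩ := exists_two_adj G hgt
      exact hC4 v y1 x0 y2
        (fun h => hvns (h ▸ hy1s)) ((hneAB hx0A hvB).symm) (fun h => hvns (h ▸ hy2s))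
        ((hneAB hx0A (hBsub hy1s)).symm) hne12 (hneAB hx0A (hBsub hy2s))
        ⟨hady1, (hadj (hcon hx0A) hy1s).symm, hadj (hcon hx0A) hy2s, hady2.symm⟩
    have hvstar1 : 1 ≤ nbrIn G (starSet G b B) v := by omega
    obtain ⟨y1, hy1s, hvy1⟩ := exists_adj_of_one_le G hvstar1
    have hy1B : y1 ∈ B := hBsub hy1s
    have hvA1 : 1 ≤ nbrIn G A v := by
      have h1 := hdsum v
      have h2 := ha v
      omega
    obtain ⟨xv, hxvA, hvxv⟩ := exists_adj_of_one_le G hvA1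
    have hvne : ∀ {w : V}, w ∈ starSet G b B → v ≠ w := fun hw h => hvns (h ▸ hw)
    -- xv has no neighbors in A
    have hxv0 : nbrIn G A xv = 0 := by
      by_contra h
      obtain ⟨x', hx'A, hadjx'⟩ := exists_adj_of_one_le G (Nat.pos_of_ne_zero h)
      exact hC4 v xv x' y1
        ((hneAB hxvA hvB).symm) ((hneAB hx'A hvB).symm) (hvne hy1s)
        (G.ne_of_adj hadjx') (hneAB hxvA hy1B) (hneAB hx'A hy1B)
        ⟨hvxv, hadjx', hadj (hcon hx'A) hy1s, hvy1.symm⟩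
    -- the a-good set S1 around y1
    obtain ⟨S1, hS1sub, hS1ne, hS1good⟩ := agood y1 hy1s
    have hy1S1 : y1 ∈ S1 := by
      by_contra hxx
      have hsubA : S1 ⊆ A := by
        intro z hz
        rcases Finset.mem_insert.1 (hS1sub hz) with rfl | h
        · exact absurd hz hxx
        · exact h
      exact no_good_subset G hdgA hsubA hS1ne hS1good
    have hy1A : y1 ∉ A := fun h => hneAB h hy1B rfl
    have hxy1 : G.Adj xv y1 := hadj (hcon hxvA) hy1s
    have hxvS1 : xv ∉ S1 := by
      intro hmem
      have hg := hS1good xv hmem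
      have hm : nbrIn G S1 xv ≤ nbrIn G (insert y1 A) xv := nbrIn_mono G hS1sub xv
      have hi : nbrIn G (insert y1 A) xv = nbrIn G A xv + if G.Adj xv y1 then 1 else 0 :=
        nbrIn_insert G hy1A xv
      have h2 := ha xv
      rw [hxv0] at hi
      split_ifs at hi <;> omega
    -- key : d_A(y1) ≥ a(y1) + 1
    have hkey : a y1 + 1 ≤ nbrIn G A y1 := by
      have h1 := hS1good y1 hy1S1
      have h2 : nbrIn G S1 y1 = nbrIn G (S1.erase y1) y1 := (nbrIn_erase_self G S1 y1).symm
      have h3 : S1.erase y1 ⊆ A.erase xv := by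
        intro z hz
        obtain ⟨hzne, hzS⟩ := Finset.mem_erase.1 hz
        rcases Finset.mem_insert.1 (hS1sub hzS) with rfl | h
        · exact absurd rfl hzne
        · exact Finset.mem_erase.2 ⟨fun he => hxvS1 (he ▸ hzS), h⟩
      have h4 := nbrIn_mono G h3 y1
      have h5 := nbrIn_erase G hxvA y1
      rw [if_pos hxy1.symm] at h5
      omega
    -- the b-good set T around xv
    obtain ⟨T, hTsub, hTne, hTgood⟩ := bgood xv hxvA (by have := ha xv; omega)
    have hxvB : xv ∉ B := fun h => hneAB hxvA h rfl
    have hy1T : y1 ∉ T := by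
      intro hmem
      have hg := hTgood y1 hmem
      have hm : nbrIn G T y1 ≤ nbrIn G (insert xv B) y1 := nbrIn_mono G hTsub y1
      have hi : nbrIn G (insert xv B) y1 = nbrIn G B y1 + if G.Adj y1 xv then 1 else 0 :=
        nbrIn_insert G hxvB y1
      rw [if_pos hxy1.symm] at hi
      have h4 := hdsum y1
      omega
    have hdisj : Disjoint S1 T := by
      rw [Finset.disjoint_left]
      intro z hzS hzT
      rcases Finset.mem_insert.1 (hS1sub hzS) with rfl | hzA
      · exact hy1T hzT
      rcases Finset.mem_insert.1 (hTsub hzT) with rfl | hzB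
      · exact hxvS1 hzS
      · exact hneAB hzA hzB rfl
    exact hnf ⟨S1, T, hdisj, hS1ne, hTne, hS1good, hTgood⟩
  -- Part 2 : conclusion
  obtain ⟨u', hu'H, hu'le⟩ := hdgA (A \ starSet G a A) Finset.sdiff_subset hMain
  have hu'le' : (nbrIn G (A \ starSet G a A) u' : ℤ) ≤ (a u' : ℤ) - 1 := hu'le
  refine ⟨⟨u', Finset.mem_filter.2 ⟨hu'H, by omega⟩⟩, ?_⟩
  intro u hu
  obtain ⟨huH, hult⟩ := Finset.mem_filter.1 hu
  obtain ⟨huA, huns⟩ := Finset.mem_sdiff.1 huH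
  have h1 : a u ≤ nbrIn G A u := by
    by_contra h
    push_neg at h
    exact huns (Finset.mem_filter.2 ⟨huA, h⟩)
  have hsplit := nbrIn_sdiff G hAsub u
  have hstarle : nbrIn G (starSet G a A) u ≤ 1 := by
    by_contra hgt
    push_neg at hgt
    obtain ⟨x1, hx1s, x2, hx2s, hne12, had1, had2⟩ := exists_two_adj G hgt
    exact hC4 u x1 y0 x2
      (G.ne_of_adj had1) (hneAB huA hy0B) (G.ne_of_adj had2)
      (hneAB (hAsub hx1s) hy0B) hne12 ((hneAB (hAsub hx2s) hy0B).symm)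
      ⟨had1, hadj hx1s hy0, (hadj hx2s hy0).symm, had2.symm⟩
  exact ⟨by omega, by omega⟩

end Main
/-- Claim 8: for any `(A,B) ∈ 𝒫`, the sets `A^⋄` and `B^⋄` are non-empty; every `u ∈ A^⋄`
has exactly one neighbor in `A*` and satisfies `d_A(u) = a(u)`, and similarly for `B^⋄`. -/
theorem diamond_properties [Fintype V] (G : SimpleGraph V) (a b : V → ℕ)
    (hC4 : C4Free G) (ha : ∀ x : V, 2 ≤ a x) (hb : ∀ x : V, 2 ≤ b x)
    (hdeg : ∀ x : V, G.degree x + 1 = a x + b x)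
    (hnf : ¬ ∃ A B : Finset V, FeasiblePair G a b A B)
    (A B : Finset V) (hAB : MaxAB G a b A B)
    (Adia Bdia : Finset V)
    (hAdia : Adia = (A \ starSet G a A).filter
      (fun u => nbrIn G (A \ starSet G a A) u < a u))
    (hBdia : Bdia = (B \ starSet G b B).filter
      (fun v => nbrIn G (B \ starSet G b B) v < b v)) :
    Adia.Nonempty ∧ Bdia.Nonempty ∧
    (∀ u ∈ Adia, nbrIn G (starSet G a A) u = 1 ∧ nbrIn G A u = a u) ∧
    (∀ v ∈ Bdia, nbrIn G (starSet G b B) v = 1 ∧ nbrIn G B v = b v) := by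
  subst hAdia hBdia
  have hdeg' : ∀ z : V, G.degree z + 1 = b z + a z := fun z => by rw [hdeg z, Nat.add_comm]
  obtain ⟨h1, h3⟩ := mainA G a b hC4 ha hb hdeg hnf A B hAB
  obtain ⟨h2, h4⟩ := mainA G b a hC4 hb ha hdeg' (hnf_swap G a b hnf) B A
    (MaxAB_swap G a b hAB)
  exact ⟨h1, h2, h3, h4⟩
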